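/- The Mellin–Jackson kernel J_{γ,β}(x) := d_{γ,β} sinc^{2β}((log x)/(2γβπ)) (c = 0, β ∈ ℕ, γ ≥ 1, d_{γ,β} the normalization making ∫₀^∞ J_{γ,β}(u) du/u = 1) satisfies: J_{γ,β} ∈ X₀, ‖J_{γ,β}‖_{X₀} = 1, and its Mellin transform [J_{γ,β}]^∧_M(iv) vanishes for |v| ≥ 1/γ, i.e. J_{γ,β} is Mellin band-limited to [−1/γ, 1/γ]. -/

import Mathlib

open Real

/-- `sinc u = sin(πu)/(πu)`, `sinc 0 = 1`. -/
noncomputable def sinc (u : ℝ) : ℝ :=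
  if u = 0 then 1 else Real.sin (π * u) / (π * u)

/-- The Mellin–Jackson kernel (with `c = 0`):
`J_{γ,β}(x) = d sinc^{2β}((log x)/(2γβπ))`. -/
noncomputable def mellinJackson (γ : ℝ) (β : ℕ) (d : ℝ) (x : ℝ) : ℝ :=
  d * _root_.sinc (Real.log x / (2 * γ * β * π)) ^ (2 * β)

/-!
Substituting `u = exp t`, the kernel becomes `d * Real.sinc (t / (2γβ)) ^ (2β)` on `ℝ`, so its
`X₀`-norm is a Lebesgue integral, which the normalisation makes `1`, and its Mellin transform at
`iv` is a Fourier transform of `Real.sinc ^ (2β)` at frequency `2γβ v`. The Fourier transform of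
`Real.sinc ^ n` (`n ≥ 2`) vanishes at every frequency `ω ≥ n`: the entire extension
`exp (iωz) * (sin z / z) ^ n` is `O(|z|⁻ⁿ)` in the closed upper half-plane, so Cauchy's theorem on
the rectangles `[-R, R] × [0, R]` bounds the integral over `[-R, R]` by `O(1/R)`. Negative
frequencies follow since `sinc` is even.
-/

open MeasureTheory Set Filter Complex Topology

namespace Real

lemma sinc_sq_mul_one_add_sq_le (x : ℝ) : sinc x ^ 2 * (1 + x ^ 2) ≤ 2 := by
  rcases eq_or_ne x 0 with rfl | hx
  · simp
  have hsin : sinc x ^ 2 * x ^ 2 = sin x ^ 2 := by rw [sinc_of_ne_zero hx]; field_simp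
  have hsinc : sinc x ^ 2 ≤ 1 := sq_le_one_iff_abs_le_one _ |>.mpr (abs_sinc_le_one x)
  nlinarith [sin_sq_le_one x]

lemma integrable_sinc_pow {n : ℕ} (hn : 2 ≤ n) : Integrable fun x ↦ sinc x ^ n := by
  refine (integrable_inv_one_add_sq.const_mul 2).mono' (continuous_sinc.pow n).aestronglyMeasurable
    (.of_forall fun x ↦ ?_)
  rw [norm_pow, norm_eq_abs, ← div_eq_mul_inv, le_div_iff₀ (by positivity)]
  calc |sinc x| ^ n * (1 + x ^ 2) ≤ |sinc x| ^ 2 * (1 + x ^ 2) := by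
        gcongr ?_ * _
        exact pow_le_pow_of_le_one (abs_nonneg _) (abs_sinc_le_one x) hn
    _ ≤ 2 := by rw [sq_abs]; exact sinc_sq_mul_one_add_sq_le x

lemma integral_sinc_pow_pos {n : ℕ} (hn : 2 ≤ n) (he : Even n) : 0 < ∫ x, sinc x ^ n := by
  rw [integral_pos_iff_support_of_nonneg (fun x ↦ he.pow_nonneg _) (integrable_sinc_pow hn)]
  exact (continuous_sinc.pow n).isOpen_support.measure_pos volume ⟨0, by simp⟩

end Real

namespace Complex

lemma norm_sin_le_exp_abs_im (z : ℂ) : ‖sin z‖ ≤ Real.exp |z.im| := by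
  have h₁ : ‖cexp (-z * I)‖ ≤ Real.exp |z.im| := by
    rw [norm_exp]; gcongr; simpa using le_abs_self z.im
  have h₂ : ‖cexp (z * I)‖ ≤ Real.exp |z.im| := by
    rw [norm_exp]; gcongr; simpa using neg_le_abs z.im
  have : ‖sin z‖ = ‖cexp (-z * I) - cexp (z * I)‖ / 2 := by
    rw [sin, norm_div, norm_mul, norm_I, mul_one, RCLike.norm_ofNat]
  rw [this]
  linarith [norm_sub_le (cexp (-z * I)) (cexp (z * I))]

lemma differentiable_dslope_sin : Differentiable ℂ (dslope sin 0) := by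
  rw [← differentiableOn_univ, differentiableOn_dslope univ_mem]
  exact differentiable_sin.differentiableOn

lemma dslope_sin_ofReal (x : ℝ) : dslope sin 0 (x : ℂ) = Real.sinc x := by
  rcases eq_or_ne x 0 with rfl | hx
  · simp [dslope_same, deriv_sin]
  · rw [dslope_of_ne _ (ofReal_ne_zero.mpr hx), slope_def_field, Real.sinc_of_ne_zero hx]
    simp

lemma norm_dslope_sin_le {z : ℂ} (hz : z ≠ 0) : ‖dslope sin 0 z‖ ≤ Real.exp |z.im| / ‖z‖ := by
  rw [dslope_of_ne _ hz, slope_def_field, sin_zero, sub_zero, sub_zero, norm_div]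
  gcongr
  exact norm_sin_le_exp_abs_im z

lemma norm_cexp_mul_dslope_sin_pow_le {n : ℕ} {ω : ℝ} (hω : n ≤ ω) {z : ℂ} (hz : 0 ≤ z.im)
    (hz₁ : 1 ≤ ‖z‖) : ‖cexp (I * ω * z) * dslope sin 0 z ^ n‖ ≤ 1 / ‖z‖ ^ n := by
  have hz₀ : 0 < ‖z‖ := one_pos.trans_le hz₁
  rw [norm_mul, norm_pow, norm_exp]
  calc Real.exp (I * ω * z).re * ‖dslope sin 0 z‖ ^ n
      ≤ Real.exp (-(ω * z.im)) * (Real.exp z.im / ‖z‖) ^ n := by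
        gcongr
        · simp
        · simpa [abs_of_nonneg hz] using norm_dslope_sin_le (norm_pos_iff.mp hz₀)
    _ = Real.exp ((n - ω) * z.im) / ‖z‖ ^ n := by
        rw [div_pow, ← Real.exp_nat_mul, mul_div_assoc', ← Real.exp_add]; ring_nf
    _ ≤ 1 / ‖z‖ ^ n := by
        gcongr
        exact Real.exp_le_one_iff.mpr (mul_nonpos_of_nonpos_of_nonneg (by linarith) hz)

lemma norm_intervalIntegral_le_of_norm_le_on_rect {f : ℂ → ℂ} (hf : Differentiable ℂ f) {R M : ℝ}
    (hR : 0 ≤ R) (hM : ∀ z : ℂ, 0 ≤ z.im → R ≤ ‖z‖ → ‖f z‖ ≤ M) :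
    ‖∫ x in -R..R, f x‖ ≤ 4 * R * M := by
  have hrect := integral_boundary_rect_eq_zero_of_differentiableOn f (-R : ℝ) (R + R * I)
    hf.differentiableOn
  simp only [add_re, ofReal_re, mul_re, I_re, I_im, ofReal_im, add_im, mul_im, mul_zero, mul_one,
    sub_zero, add_zero, zero_add, ofReal_zero, ofReal_neg, neg_re, neg_im, neg_zero,
    zero_mul] at hrect
  have htop : ‖∫ x in -R..R, f (x + R * I)‖ ≤ M * |R - -R| :=
    intervalIntegral.norm_integral_le_of_norm_le_const fun x _ ↦ hM _ (by simpa using hR)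
      (by simpa [abs_of_nonneg hR] using abs_im_le_norm (x + R * I))
  have hside : ∀ s : ℝ, |s| = R → ‖∫ y in (0 : ℝ)..R, f (s + y * I)‖ ≤ M * |R - 0| := by
    intro s hs
    refine intervalIntegral.norm_integral_le_of_norm_le_const fun y hy ↦ ?_
    rw [uIoc_of_le hR] at hy
    exact hM _ (by simpa using hy.1.le) (by simpa [hs] using abs_re_le_norm (s + y * I))
  have hright := hside R (abs_of_nonneg hR)
  have hleft := hside (-R) (by rw [abs_neg, abs_of_nonneg hR])
  rw [ofReal_neg] at hleft
  have hbottom : (∫ x in -R..R, f x) = (∫ x in -R..R, f (x + R * I))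
      - I • (∫ y in (0 : ℝ)..R, f (R + y * I)) + I • (∫ y in (0 : ℝ)..R, f (-R + y * I)) := by
    linear_combination hrect
  rw [hbottom]
  calc _ ≤ ‖∫ x in -R..R, f (x + R * I)‖ + ‖I • ∫ y in (0 : ℝ)..R, f (R + y * I)‖
        + ‖I • ∫ y in (0 : ℝ)..R, f (-R + y * I)‖ :=
          (norm_add_le _ _).trans (by gcongr; exact norm_sub_le _ _)
    _ ≤ M * |R - -R| + M * |R - 0| + M * |R - 0| := by
        rw [norm_smul, norm_smul, norm_I, one_mul, one_mul]
        gcongr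
    _ = 4 * R * M := by
        rw [sub_neg_eq_add, sub_zero, abs_of_nonneg (by linarith), abs_of_nonneg hR]; ring

theorem integral_eq_zero_of_norm_le_div_sq {f : ℂ → ℂ} (hf : Differentiable ℂ f)
    (hint : Integrable fun x : ℝ ↦ f x) {C : ℝ}
    (hC : ∀ z : ℂ, 0 ≤ z.im → 1 ≤ ‖z‖ → ‖f z‖ ≤ C / ‖z‖ ^ 2) :
    ∫ x : ℝ, f x = 0 := by
  have hC₀ : 0 ≤ C := by simpa using (norm_nonneg _).trans (hC I (by simp) (by simp))
  have hbound : ∀ R : ℝ, 1 ≤ R → ‖∫ x in -R..R, f x‖ ≤ 4 * C * R⁻¹ := by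
    intro R hR
    have hR₀ : 0 < R := one_pos.trans_le hR
    calc ‖∫ x in -R..R, f x‖ ≤ 4 * R * (C / R ^ 2) :=
          norm_intervalIntegral_le_of_norm_le_on_rect hf hR₀.le fun z hz hzR ↦
            (hC z hz (hR.trans hzR)).trans (by gcongr)
      _ = 4 * C * R⁻¹ := by field_simp
  have hzero : Tendsto (fun R : ℝ ↦ ∫ x in -R..R, f x) atTop (𝓝 0) := by
    refine squeeze_zero_norm' (eventually_atTop.mpr ⟨1, hbound⟩) ?_
    simpa using tendsto_inv_atTop_zero.const_mul (4 * C)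
  exact tendsto_nhds_unique
    (intervalIntegral_tendsto_integral hint tendsto_neg_atTop_atBot tendsto_id) hzero

end Complex

namespace Real

lemma integral_exp_mul_sinc_pow_eq_zero_of_le {n : ℕ} (hn : 2 ≤ n) {ω : ℝ} (hω : n ≤ ω) :
    ∫ x : ℝ, cexp (I * ω * x) * (sinc x : ℂ) ^ n = 0 := by
  set f : ℂ → ℂ := fun z ↦ cexp (I * ω * z) * dslope Complex.sin 0 z ^ n
  have hf : Differentiable ℂ f :=
    (Complex.differentiable_exp.comp (differentiable_id.const_mul _)).mul
      (Complex.differentiable_dslope_sin.pow n)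
  have hf_ofReal : ∀ x : ℝ, f x = cexp (I * ω * x) * (sinc x : ℂ) ^ n := fun x ↦ by
    simp only [f, Complex.dslope_sin_ofReal]
  simp_rw [← hf_ofReal]
  refine Complex.integral_eq_zero_of_norm_le_div_sq hf ?_ (C := 1) fun z hz hz₁ ↦ ?_
  · refine (integrable_sinc_pow hn).norm.mono'
      (hf.continuous.comp continuous_ofReal).aestronglyMeasurable (.of_forall fun x ↦ ?_)
    simp [hf_ofReal, Complex.norm_exp]
  · refine (Complex.norm_cexp_mul_dslope_sin_pow_le hω hz hz₁).trans ?_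
    gcongr

theorem integral_exp_mul_sinc_pow_eq_zero {n : ℕ} (hn : 2 ≤ n) {ω : ℝ} (hω : n ≤ |ω|) :
    ∫ x : ℝ, cexp (I * ω * x) * (sinc x : ℂ) ^ n = 0 := by
  rcases le_total 0 ω with hω₀ | hω₀
  · exact integral_exp_mul_sinc_pow_eq_zero_of_le hn (by rwa [abs_of_nonneg hω₀] at hω)
  · rw [← integral_neg_eq_self, ← integral_exp_mul_sinc_pow_eq_zero_of_le hn (ω := -ω)
      (by rwa [abs_of_nonpos hω₀] at hω)]
    congr! 3 with x
    · push_cast; ring_nf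
    · rw [sinc_neg]

end Real

section LogChangeOfVariables

variable {E : Type*} [NormedAddCommGroup E] [NormedSpace ℝ E]

lemma integral_Ioi_inv_smul_comp_log (g : ℝ → E) :
    ∫ u in Ioi 0, u⁻¹ • g (Real.log u) = ∫ t, g t := by
  rw [← Real.range_exp, ← image_univ, integral_image_eq_integral_abs_deriv_smul MeasurableSet.univ
    (fun t _ ↦ (Real.hasDerivAt_exp t).hasDerivWithinAt) Real.exp_injective.injOn, setIntegral_univ]
  simp [smul_smul, Real.exp_ne_zero]

lemma integrableOn_Ioi_inv_smul_comp_log_iff {g : ℝ → E} :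
    IntegrableOn (fun u ↦ u⁻¹ • g (Real.log u)) (Ioi 0) ↔ Integrable g := by
  rw [← Real.range_exp, ← image_univ, integrableOn_image_iff_integrableOn_abs_deriv_smul
    MeasurableSet.univ (fun t _ ↦ (Real.hasDerivAt_exp t).hasDerivWithinAt)
    Real.exp_injective.injOn, integrableOn_univ]
  simp [smul_smul, Real.exp_ne_zero]

lemma integral_Ioi_inv_smul_comp_log_div {a : ℝ} (ha : 0 < a) (g : ℝ → E) :
    ∫ u in Ioi 0, u⁻¹ • g (Real.log u / a) = a • ∫ t, g t := by
  rw [integral_Ioi_inv_smul_comp_log (fun t ↦ g (t / a)), Measure.integral_comp_div,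
    abs_of_pos ha]

lemma MeasureTheory.Integrable.integrableOn_Ioi_inv_smul_comp_log_div {g : ℝ → E}
    (hg : Integrable g) {a : ℝ} (ha : a ≠ 0) :
    IntegrableOn (fun u ↦ u⁻¹ • g (Real.log u / a)) (Ioi 0) :=
  integrableOn_Ioi_inv_smul_comp_log_iff.mpr (hg.comp_div ha)

end LogChangeOfVariables

lemma Complex.ofReal_cpow_I_mul_sub_one {u : ℝ} (hu : 0 < u) (v : ℝ) :
    (u : ℂ) ^ (I * v - 1) = u⁻¹ * cexp (I * v * Real.log u) := by
  have hu' : (u : ℂ) ≠ 0 := ofReal_ne_zero.mpr hu.ne'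
  rw [cpow_sub _ _ hu', cpow_one, cpow_def_of_ne_zero hu', ← ofReal_log hu.le, ofReal_inv,
    div_eq_inv_mul, mul_comm (Real.log u : ℂ)]

namespace Real

lemma integral_Ioi_sinc_log_div_pow_div {a : ℝ} (ha : 0 < a) (n : ℕ) :
    ∫ u in Ioi 0, sinc (log u / a) ^ n / u = a * ∫ t, sinc t ^ n := by
  simpa only [smul_eq_mul, inv_mul_eq_div] using
    integral_Ioi_inv_smul_comp_log_div ha fun t ↦ sinc t ^ n

lemma integrableOn_Ioi_sinc_log_div_pow_div {a : ℝ} (ha : a ≠ 0) {n : ℕ} (hn : 2 ≤ n) :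
    IntegrableOn (fun u ↦ sinc (log u / a) ^ n / u) (Ioi 0) := by
  simpa only [smul_eq_mul, inv_mul_eq_div] using
    (integrable_sinc_pow hn).integrableOn_Ioi_inv_smul_comp_log_div ha

theorem mellin_sinc_log_div_pow_eq_zero {a : ℝ} (ha : 0 < a) {n : ℕ} (hn : 2 ≤ n) {v : ℝ}
    (hv : n ≤ a * |v|) : mellin (fun u ↦ (sinc (log u / a) : ℂ) ^ n) (I * v) = 0 := by
  calc mellin (fun u ↦ (sinc (log u / a) : ℂ) ^ n) (I * v)
      = ∫ u in Ioi 0, u⁻¹ • (cexp (I * ↑(v * a) * ↑(log u / a)) * (sinc (log u / a) : ℂ) ^ n) :=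
        setIntegral_congr_fun measurableSet_Ioi fun u hu ↦ by
          have hlog : I * (v * a : ℝ) * (log u / a : ℝ) = I * v * log u := by
            push_cast
            field_simp [ofReal_ne_zero.mpr ha.ne']
          rw [smul_eq_mul, ofReal_cpow_I_mul_sub_one hu, real_smul, hlog, ofReal_inv, mul_assoc]
    _ = a • ∫ t : ℝ, cexp (I * ↑(v * a) * t) * (sinc t : ℂ) ^ n :=
        integral_Ioi_inv_smul_comp_log_div ha fun t ↦ cexp (I * ↑(v * a) * t) * (sinc t : ℂ) ^ n
    _ = 0 := by
        rw [integral_exp_mul_sinc_pow_eq_zero hn (by rwa [abs_mul, abs_of_pos ha, mul_comm]),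
          smul_zero]

end Real

lemma sinc_div_mul_pi (x b : ℝ) : _root_.sinc (x / (b * π)) = Real.sinc (x / b) := by
  rw [_root_.sinc, Real.sinc_apply, mul_div_assoc', mul_comm π, mul_div_mul_right _ _ pi_ne_zero]
  simp only [div_eq_zero_iff, mul_eq_zero, pi_ne_zero, or_false]

/-- The Mellin–Jackson kernel belongs to `X₀` with `‖J_{γ,β}‖_{X₀} = 1`, and is Mellin
band-limited to `[-1/γ, 1/γ]`. -/
theorem mellinJackson_bandlimited
    (γ : ℝ) (hγ : 1 ≤ γ) (β : ℕ) (hβ : 1 ≤ β) (d : ℝ)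
    (hd : d⁻¹ = ∫ u in Set.Ioi (0:ℝ), _root_.sinc (Real.log u / (2 * γ * β * π)) ^ (2 * β) / u) :
    MeasureTheory.IntegrableOn
      (fun u : ℝ => |mellinJackson γ β d u| / u) (Set.Ioi (0:ℝ)) ∧
    (∫ u in Set.Ioi (0:ℝ), |mellinJackson γ β d u| / u) = 1 ∧
    ∀ v : ℝ, 1 / γ ≤ |v| →
      ∫ u in Set.Ioi (0:ℝ),
        (u : ℂ) ^ (Complex.I * v - 1) * (mellinJackson γ β d u : ℂ) = 0 := by
  set a : ℝ := 2 * γ * β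
  have ha : 0 < a := by
    have : (0 : ℝ) < β := by exact_mod_cast hβ
    positivity
  have hn : 2 ≤ 2 * β := by omega
  have hJ (u : ℝ) : mellinJackson γ β d u = d * Real.sinc (Real.log u / a) ^ (2 * β) := by
    rw [mellinJackson, sinc_div_mul_pi]
  have hd' : d⁻¹ = a * ∫ t, Real.sinc t ^ (2 * β) := by
    simpa only [hd, sinc_div_mul_pi] using Real.integral_Ioi_sinc_log_div_pow_div ha (2 * β)
  have hd_pos : 0 < d :=
    inv_pos.mp (hd' ▸ mul_pos ha (Real.integral_sinc_pow_pos hn (even_two_mul β)))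
  have habs : (fun u ↦ |mellinJackson γ β d u| / u)
      = fun u ↦ d * (Real.sinc (Real.log u / a) ^ (2 * β) / u) := by
    ext u
    rw [hJ, abs_of_nonneg (mul_nonneg hd_pos.le ((even_two_mul β).pow_nonneg _)), mul_div_assoc]
  refine ⟨habs ▸ (Real.integrableOn_Ioi_sinc_log_div_pow_div ha.ne' hn).const_mul d, ?_,
    fun v hv ↦ ?_⟩
  · rw [habs, integral_const_mul, Real.integral_Ioi_sinc_log_div_pow_div ha, ← hd',
      mul_inv_cancel₀ hd_pos.ne']
  have hva : ((2 * β : ℕ) : ℝ) ≤ a * |v| :=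
    calc ((2 * β : ℕ) : ℝ) = a * (1 / γ) := by simp only [a]; push_cast; field_simp
      _ ≤ a * |v| := by gcongr
  change mellin (fun u ↦ (mellinJackson γ β d u : ℂ)) (I * v) = 0
  simp_rw [hJ, ofReal_mul, ofReal_pow, ← smul_eq_mul (a := (d : ℂ))]
  rw [mellin_const_smul, Real.mellin_sinc_log_div_pow_eq_zero ha hn hva, smul_zero]
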